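/- arXiv:1803.05256 — 2 statements merged into one kernel-verified Lean document; each statement's English description precedes it below -/
import Mathlib

section
/- Consider minimizing f(x) + δ_C(Ax) where f ∈ C² is μ_f-strongly convex and C = {z ∈ ℝ^m : z ≤ b}. Let (x⋆, y⋆) be a primal-dual solution with active set J = {i : (Ax⋆)_i = b_i} satisfying strict complementarity ((y⋆)_i > 0 for all i ∈ J). Partition H = ∇²f(x⋆)^{-1} and A accordingly. Then the Jacobian of the residual R_γ at y⋆ exists and equals the block matrix [[A_J H_{JJ} A_Jᵀ, A_J H_{J\bar J} A_{\bar J}ᵀ], [0, (1/γ) I]]; in particular it is nonsingular if and only if A_J has full row rank (LICQ). -/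
/-!
The minimizer `x(y)` of `f + ⟪y, A ·⟫` solves `∇f (x y) = -Aᵀ y`. Strong convexity makes `∇f`
injective, and its derivative at `x⋆` is invertible, so the inverse function theorem gives
`x'(y⋆) = -H Aᵀ`. The projection onto the box is the coordinatewise `min · b`, and strict
complementarity keeps the active set equal to `J` near `y⋆`; there
`R y = P (b - A x(y)) + γ⁻¹ (y - P y)`, whose derivative is `M`.

If `M z = 0`, the component of `M z` off `J` is `γ⁻¹ (z - P z)`, so `z = P z`, and then
`0 = ⟪M z, z⟫ = ⟪H Aᵀ z, Aᵀ z⟫` forces `Aᵀ z = 0` because `H` is positive definite. Hence `M` is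
injective iff `Aᵀ` is injective on `range P`, which by `(range (P A))ᗮ = ker (Aᵀ P)` says
`range (P A) = range P`.
-/

open scoped InnerProductSpace RealInnerProductSpace
open Filter Topology

noncomputable section

abbrev E (n : ℕ) := EuclideanSpace ℝ (Fin n)

/-- Convexity for extended-real-valued functions. -/
def EConvexOn {n : ℕ} (f : E n → EReal) : Prop :=
  ∀ x y : E n, ∀ a b : ℝ, 0 ≤ a → 0 ≤ b → a + b = 1 →
    f (a • x + b • y) ≤ (a : EReal) * f x + (b : EReal) * f y

def ProperFun {n : ℕ} (f : E n → EReal) : Prop :=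
  (∃ x, f x ≠ ⊤) ∧ ∀ x, f x ≠ ⊥

def ProperClosedConvex {n : ℕ} (f : E n → EReal) : Prop :=
  ProperFun f ∧ LowerSemicontinuous f ∧ EConvexOn f

/-- `f` is strongly convex with modulus `μ`: `f - (μ/2)‖·‖²` is convex. -/
def StronglyConvexWithMod {n : ℕ} (μ : ℝ) (f : E n → EReal) : Prop :=
  EConvexOn (fun x => f x - ((μ / 2 * ‖x‖ ^ 2 : ℝ) : EReal))

/-- Fenchel conjugate. -/
def conjFn {n : ℕ} (f : E n → EReal) (y : E n) : EReal :=
  ⨆ x : E n, ((⟪x, y⟫_ℝ : ℝ) : EReal) - f x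

/-- Convex subdifferential. -/
def Subdiff {n : ℕ} (f : E n → EReal) (x : E n) : Set (E n) :=
  {v | ∀ z, f x + ((⟪v, z - x⟫_ℝ : ℝ) : EReal) ≤ f z}

/-- `p` is the proximal point of `x` for `h` with stepsize `γ`. -/
def IsProx {n : ℕ} (γ : ℝ) (h : E n → EReal) (x p : E n) : Prop :=
  ∀ z : E n, h p + ((1 / (2 * γ) * ‖p - x‖ ^ 2 : ℝ) : EReal) ≤
    h z + ((1 / (2 * γ) * ‖z - x‖ ^ 2 : ℝ) : EReal)

/-- Moreau envelope. -/
def moreauEnv {n : ℕ} (γ : ℝ) (h : E n → EReal) (x : E n) : EReal :=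
  ⨅ z : E n, h z + ((1 / (2 * γ) * ‖z - x‖ ^ 2 : ℝ) : EReal)

/-- Dual objective `ψ(y) = f*(-Aᵀy) + g*(y)`. -/
def dualObj {n m : ℕ} (f : E n → EReal) (g : E m → EReal) (A : E n →L[ℝ] E m)
    (y : E m) : EReal :=
  conjFn f (-(ContinuousLinearMap.adjoint A y)) + conjFn g y

/-- The alternating minimization envelope `ψ_γ(y) = -L_γ(x(y), z_γ(y), y)`. -/
def AME {n m : ℕ} (f : E n → EReal) (g : E m → EReal) (A : E n →L[ℝ] E m)
    (γ : ℝ) (xmin : E m → E n) (zmin : E m → E m) (y : E m) : EReal :=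
  -(f (xmin y) + g (zmin y)
    + ((⟪y, A (xmin y) - zmin y⟫_ℝ + γ / 2 * ‖A (xmin y) - zmin y‖ ^ 2 : ℝ) : EReal))


open Classical in
/-- Coordinate projection onto the coordinates in `J`. -/
def coordProj {m : ℕ} (J : Set (Fin m)) : E m →ₗ[ℝ] E m where
  toFun y := (WithLp.toLp 2 (fun i => if i ∈ J then y i else 0) : EuclideanSpace ℝ (Fin m))
  map_add' x y := by
    ext i; by_cases h : i ∈ J <;> simp [h]
  map_smul' c x := by
    ext i; by_cases h : i ∈ J <;> simp [h]

section InnerProductSpace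

variable {F : Type*} [NormedAddCommGroup F] [InnerProductSpace ℝ F]

lemma ConvexOn.add_inner_le_of_hasGradientAt [CompleteSpace F] {φ : F → ℝ}
    (hφ : ConvexOn ℝ Set.univ φ) {u g : F} (hg : HasGradientAt φ g u) (x : F) :
    φ u + ⟪g, x - u⟫_ℝ ≤ φ x := by
  let ℓ := AffineMap.lineMap (k := ℝ) u x
  have hℓ : HasDerivAt (φ ∘ ℓ) ⟪g, x - u⟫_ℝ 0 := by
    have hg' : HasFDerivAt φ (InnerProductSpace.toDual ℝ F g) (ℓ 0) := by
      simpa [ℓ] using hg.hasFDerivAt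
    simpa using hg'.comp_hasDerivAt (0 : ℝ) AffineMap.hasDerivAt_lineMap
  have := (hφ.comp_affineMap ℓ).le_slope_of_hasDerivAt (Set.mem_univ 0) (Set.mem_univ 1)
    zero_lt_one hℓ
  simp only [slope_def_field, Function.comp_apply, AffineMap.lineMap_apply_one,
    AffineMap.lineMap_apply_zero, sub_zero, div_one, ℓ] at this
  linarith

lemma ConvexOn.inner_sub_nonneg_of_hasGradientAt [CompleteSpace F] {φ : F → ℝ}
    (hφ : ConvexOn ℝ Set.univ φ) {z w gz gw : F} (hz : HasGradientAt φ gz z)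
    (hw : HasGradientAt φ gw w) : 0 ≤ ⟪gz - gw, z - w⟫_ℝ := by
  have h₁ := hφ.add_inner_le_of_hasGradientAt hz w
  have h₂ := hφ.add_inner_le_of_hasGradientAt hw z
  rw [← neg_sub z w, inner_neg_right] at h₁
  rw [inner_sub_left]
  linarith

/-- `f - (μ/2)‖·‖²` is convex with gradient `∇f - μ • id`. -/
lemma StrongConvexOn.mul_norm_sq_le_inner_gradient_sub [CompleteSpace F] {μ : ℝ} {f : F → ℝ}
    (hf : StrongConvexOn Set.univ μ f) (hd : Differentiable ℝ f) (z w : F) :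
    μ * ‖z - w‖ ^ 2 ≤ ⟪gradient f z - gradient f w, z - w⟫_ℝ := by
  have hshift : ∀ x, HasGradientAt (fun x => f x - μ / 2 * ‖x‖ ^ 2) (gradient f x - μ • x) x := by
    intro x
    rw [hasGradientAt_iff_hasFDerivAt]
    refine ((hasGradientAt_iff_hasFDerivAt.mp (hd x).hasGradientAt).fun_sub
      ((hasStrictFDerivAt_norm_sq x).hasFDerivAt.const_mul (μ / 2))).congr_fderiv ?_
    ext v
    simp only [toDual_gradient, sub_apply, smul_apply, coe_innerSL_apply, nsmul_eq_mul,
      Nat.cast_ofNat, smul_eq_mul, map_sub, map_smul, InnerProductSpace.toDual_apply_apply,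
      sub_right_inj]
    ring
  have := (strongConvexOn_iff_convex.mp hf).inner_sub_nonneg_of_hasGradientAt (hshift z) (hshift w)
  rw [show gradient f z - μ • z - (gradient f w - μ • w)
      = (gradient f z - gradient f w) - μ • (z - w) by module,
    inner_sub_left, real_inner_smul_left, real_inner_self_eq_norm_sq] at this
  linarith

lemma HasGradientAt.eq_neg_adjoint_of_forall_le [CompleteSpace F] {G : Type*}
    [NormedAddCommGroup G] [InnerProductSpace ℝ G] [CompleteSpace G] {f : F → ℝ}
    {A : F →L[ℝ] G} {y : G} {x₀ g : F} (hg : HasGradientAt f g x₀)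
    (hmin : ∀ x, f x₀ + ⟪y, A x₀⟫_ℝ ≤ f x + ⟪y, A x⟫_ℝ) :
    g = -(ContinuousLinearMap.adjoint A y) := by
  have hφ : HasGradientAt (fun x => f x + ⟪y, A x⟫_ℝ) (g + ContinuousLinearMap.adjoint A y) x₀ := by
    rw [hasGradientAt_iff_hasFDerivAt]
    refine ((hasGradientAt_iff_hasFDerivAt.mp hg).fun_add
      ((innerSL ℝ y).comp A).hasFDerivAt).congr_fderiv ?_
    ext v
    simp [ContinuousLinearMap.adjoint_inner_left]
  have hzero := IsLocalMin.hasFDerivAt_eq_zero (Filter.Eventually.of_forall hmin) hφ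
  rw [LinearIsometryEquiv.map_eq_zero_iff] at hzero
  exact eq_neg_of_add_eq_zero_left hzero

lemma ContDiff.hasStrictFDerivAt_gradient [CompleteSpace F] {f : F → ℝ} (hf : ContDiff ℝ 2 f)
    {H : F →L[ℝ] F} {x : F} (hH : HasFDerivAt (gradient f) H x) :
    HasStrictFDerivAt (gradient f) H x := by
  have hC1 : ContDiff ℝ 1 (gradient f) :=
    (InnerProductSpace.toDual ℝ F).symm.contDiff.comp (hf.fderiv_right (by norm_num))
  simpa [hH.fderiv] using (hC1.contDiffAt (x := x)).hasStrictFDerivAt one_ne_zero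

lemma injective_of_mul_norm_sq_le_inner_sub {μ : ℝ} (hμ : 0 < μ) {g : F → F}
    (hg : ∀ z w, μ * ‖z - w‖ ^ 2 ≤ ⟪g z - g w, z - w⟫_ℝ) : Function.Injective g := by
  intro z w h
  have := hg z w
  rw [h, sub_self, inner_zero_left] at this
  have : ‖z - w‖ ^ 2 ≤ 0 := by nlinarith
  exact sub_eq_zero.mp (norm_eq_zero.mp (by nlinarith [norm_nonneg (z - w)]))

lemma mul_norm_sq_le_inner_apply_of_hasFDerivAt {μ : ℝ} {g : F → F}
    (hg : ∀ z w, μ * ‖z - w‖ ^ 2 ≤ ⟪g z - g w, z - w⟫_ℝ) {L : F →L[ℝ] F} {x : F}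
    (hL : HasFDerivAt g L x) (v : F) : μ * ‖v‖ ^ 2 ≤ ⟪L v, v⟫_ℝ := by
  have hline : HasDerivAt (fun t : ℝ => x + t • v) v 0 := by
    simpa using ((hasDerivAt_id (0 : ℝ)).smul_const v).const_add x
  have hL' : HasFDerivAt g L (x + (0 : ℝ) • v) := by simpa using hL
  have hderiv : HasDerivAt (fun t : ℝ => ⟪g (x + t • v), v⟫_ℝ) ⟪L v, v⟫_ℝ 0 := by
    simpa using (hL'.comp_hasDerivAt 0 hline).inner ℝ (hasDerivAt_const 0 v)
  have hslope : Tendsto (slope (fun t : ℝ => ⟪g (x + t • v), v⟫_ℝ) 0) (𝓝[>] 0)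
      (𝓝 ⟪L v, v⟫_ℝ) :=
    (hasDerivAt_iff_tendsto_slope.mp hderiv).mono_left (nhdsWithin_mono _ fun t ht => ne_of_gt ht)
  refine ge_of_tendsto hslope ?_
  filter_upwards [self_mem_nhdsWithin] with t (ht : 0 < t)
  have hmono := hg (x + t • v) x
  rw [add_sub_cancel_left, norm_smul, real_inner_smul_right, Real.norm_eq_abs, abs_of_pos ht]
    at hmono
  rw [slope_def_field, le_div_iff₀ (by simpa using ht), ← inner_sub_left]
  simp only [zero_smul, add_zero, sub_zero]
  nlinarith

lemma inner_apply_pos_of_comp_eq_id {μ : ℝ} (hμ : 0 < μ) {L L' : F →L[ℝ] F}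
    (hL : ∀ v, μ * ‖v‖ ^ 2 ≤ ⟪L v, v⟫_ℝ)
    (hLL' : L.comp L' = ContinuousLinearMap.id ℝ F) (w : F) (hw : w ≠ 0) : 0 < ⟪L' w, w⟫_ℝ := by
  have hw' : L (L' w) = w := congr($hLL' w)
  have hL'w : L' w ≠ 0 := fun h => hw (by rw [← hw', h, map_zero])
  calc 0 < μ * ‖L' w‖ ^ 2 := by positivity
    _ ≤ ⟪L (L' w), L' w⟫_ℝ := hL _
    _ = ⟪L' w, w⟫_ℝ := by rw [hw', real_inner_comm]

lemma eq_of_forall_norm_sub_le_of_convex {K : Set F} (hK : Convex ℝ K) {w p q : F} (hp : p ∈ K)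
    (hq : q ∈ K) (hpmin : ∀ z ∈ K, ‖p - w‖ ≤ ‖z - w‖) (hqmin : ∀ z ∈ K, ‖q - w‖ ≤ ‖z - w‖) :
    p = q := by
  have hmid : (1 / 2 : ℝ) • p + (1 / 2 : ℝ) • q ∈ K :=
    hK hp hq (by norm_num) (by norm_num) (by norm_num)
  have h₁ := hpmin _ hmid
  have h₂ := hqmin _ hmid
  have hpara := parallelogram_law_with_norm ℝ (p - w) (q - w)
  rw [show p - w + (q - w) = (2 : ℝ) • ((1 / 2 : ℝ) • p + (1 / 2 : ℝ) • q - w) by module,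
    show p - w - (q - w) = p - q by abel, norm_smul, Real.norm_two] at hpara
  have : ‖p - q‖ ^ 2 ≤ 0 := by nlinarith [norm_nonneg (p - w), norm_nonneg (q - w)]
  exact sub_eq_zero.mp (norm_eq_zero.mp (by nlinarith [norm_nonneg (p - q)]))

end InnerProductSpace

/-- By injectivity, `x` agrees near `y₀` with the local inverse of `φ` composed with `T`. -/
lemma HasStrictFDerivAt.hasFDerivAt_of_apply_eq {𝕜 : Type*} [RCLike 𝕜] {F G : Type*}
    [NormedAddCommGroup F] [NormedSpace 𝕜 F] [CompleteSpace F]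
    [NormedAddCommGroup G] [NormedSpace 𝕜 G] {φ : F → F} {L : F ≃L[𝕜] F} {a : F}
    (hφ : HasStrictFDerivAt φ (L : F →L[𝕜] F) a) (hinj : Function.Injective φ)
    {x T : G → F} {T' : G →L[𝕜] F} {y₀ : G} (hT : HasFDerivAt T T' y₀) (hTy₀ : T y₀ = φ a)
    (hx : ∀ y, φ (x y) = T y) : HasFDerivAt x ((L.symm : F →L[𝕜] F).comp T') y₀ := by
  set ψ := hφ.localInverse φ L a
  have hψ : HasFDerivAt ψ (L.symm : F →L[𝕜] F) (T y₀) := hTy₀ ▸ hφ.to_localInverse.hasFDerivAt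
  have hlocal : x =ᶠ[𝓝 y₀] ψ ∘ T := by
    have hTlim : Tendsto T (𝓝 y₀) (𝓝 (φ a)) := hTy₀ ▸ hT.continuousAt
    filter_upwards [hTlim.eventually hφ.eventually_right_inverse] with y hy
    exact hinj (by rw [hx, Function.comp_apply, hy])
  exact (hψ.comp y₀ hT).congr_of_eventuallyEq hlocal

lemma StrongConvexOn.hasFDerivAt_argmin {F G : Type*} [NormedAddCommGroup F]
    [InnerProductSpace ℝ F] [CompleteSpace F] [NormedAddCommGroup G] [InnerProductSpace ℝ G]
    [CompleteSpace G] {μ : ℝ} (hμ : 0 < μ) {f : F → ℝ} (hsc : StrongConvexOn Set.univ μ f)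
    (hf : ContDiff ℝ 2 f) {A : F →L[ℝ] G} {xmin : G → F}
    (hx : ∀ y x, f (xmin y) + ⟪y, A (xmin y)⟫_ℝ ≤ f x + ⟪y, A x⟫_ℝ) {x₀ : F} {y₀ : G}
    (hstat : gradient f x₀ = -(ContinuousLinearMap.adjoint A y₀)) {L : F ≃L[ℝ] F}
    (hL : HasFDerivAt (gradient f) (L : F →L[ℝ] F) x₀) :
    xmin y₀ = x₀ ∧
      HasFDerivAt xmin ((L.symm : F →L[ℝ] F).comp (-ContinuousLinearMap.adjoint A)) y₀ := by
  have hd : Differentiable ℝ f := hf.differentiable (by norm_num)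
  have hinj : Function.Injective (gradient f) :=
    injective_of_mul_norm_sq_le_inner_sub hμ (hsc.mul_norm_sq_le_inner_gradient_sub hd)
  have hgrad : ∀ y, gradient f (xmin y) = -(ContinuousLinearMap.adjoint A y) := fun y =>
    (hd _).hasGradientAt.eq_neg_adjoint_of_forall_le (hx y)
  exact ⟨hinj (by rw [hgrad, hstat]), (hf.hasStrictFDerivAt_gradient hL).hasFDerivAt_of_apply_eq
    hinj (ContinuousLinearMap.adjoint A).hasFDerivAt.neg hstat.symm hgrad⟩

lemma convex_setOf_forall_le {ι : Type*} (b : EuclideanSpace ℝ ι) :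
    Convex ℝ {z : EuclideanSpace ℝ ι | ∀ i, z i ≤ b i} := by
  rw [Set.ofPred_forall]
  exact convex_iInter fun i => convex_halfSpace_le (EuclideanSpace.proj i).isLinear (b i)

lemma norm_min_sub_le {ι : Type*} [Fintype ι] (b w z : EuclideanSpace ℝ ι) (hz : ∀ i, z i ≤ b i) :
    ‖WithLp.toLp 2 (fun i => min (w i) (b i)) - w‖ ≤ ‖z - w‖ := by
  rw [EuclideanSpace.norm_eq, EuclideanSpace.norm_eq]
  gcongr with i
  simp only [PiLp.sub_apply, Real.norm_eq_abs]
  rcases le_total (w i) (b i) with h | h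
  · simp [min_eq_left h]
  · rw [min_eq_right h, abs_sub_comm, abs_of_nonneg (sub_nonneg.mpr h), abs_sub_comm,
      abs_of_nonneg (by linarith [hz i])]
    linarith [hz i]

lemma eq_min_of_forall_norm_sub_le {ι : Type*} [Fintype ι] {b w p : EuclideanSpace ℝ ι}
    (hp : ∀ i, p i ≤ b i)
    (hmin : ∀ z : EuclideanSpace ℝ ι, (∀ i, z i ≤ b i) → ‖p - w‖ ≤ ‖z - w‖) :
    p = WithLp.toLp 2 (fun i => min (w i) (b i)) :=
  eq_of_forall_norm_sub_le_of_convex (convex_setOf_forall_le b) hp (fun _ => min_le_right _ _)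
    hmin (norm_min_sub_le b w)

section StarProjection

variable {V W : Type*} [NormedAddCommGroup V] [InnerProductSpace ℝ V] [CompleteSpace V]
  [NormedAddCommGroup W] [InnerProductSpace ℝ W] [CompleteSpace W]
  {P : V →L[ℝ] V} {B : W →L[ℝ] V}

lemma injective_comp_adjoint_add_smul_iff (hP : IsStarProjection P) {H : W →L[ℝ] W}
    (hH : ∀ w ≠ 0, 0 < ⟪H w, w⟫_ℝ) {c : ℝ} (hc : c ≠ 0) :
    Function.Injective (P.comp (B.comp (H.comp (ContinuousLinearMap.adjoint B)))
        + c • (ContinuousLinearMap.id ℝ V - P)) ↔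
      ∀ u, ContinuousLinearMap.adjoint B (P u) = 0 → P u = 0 := by
  have hPP : ∀ u, P (P u) = P u := fun u => congr($(hP.isIdempotentElem.eq) u)
  have hPsym : ∀ u v, ⟪P u, v⟫_ℝ = ⟪u, P v⟫_ℝ :=
    ContinuousLinearMap.isSelfAdjoint_iff_isSymmetric.mp hP.isSelfAdjoint
  rw [injective_iff_map_eq_zero]
  simp only [add_apply, ContinuousLinearMap.comp_apply, smul_apply, sub_apply,
    ContinuousLinearMap.id_apply]
  constructor
  · intro hinj u hu
    exact hinj _ (by rw [hu, map_zero, map_zero, map_zero, hPP, sub_self, smul_zero, add_zero])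
  · intro hcond z hz
    set w := ContinuousLinearMap.adjoint B z
    have hPBHw : P (B (H w)) = 0 := by
      simpa [hPP] using congr(P $hz)
    have hzP : P z = z := by
      rw [hPBHw, zero_add, smul_eq_zero_iff_right hc, sub_eq_zero] at hz
      exact hz.symm
    have hw : w = 0 := by
      by_contra hw
      have : ⟪H w, w⟫_ℝ = 0 := by
        rw [ContinuousLinearMap.adjoint_inner_right, ← hzP, ← hPsym, hPBHw, inner_zero_left]
      exact (hH w hw).ne' this
    rw [← hzP]
    exact hcond z (by rw [hzP]; exact hw)

lemma range_comp_eq_range_iff [FiniteDimensional ℝ V] (hP : IsStarProjection P) :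
    (P.comp B).range = P.range ↔ ∀ u, ContinuousLinearMap.adjoint B (P u) = 0 → P u = 0 := by
  rw [← Submodule.orthogonalComplement_eq_orthogonalComplement,
    ContinuousLinearMap.orthogonal_range, ContinuousLinearMap.orthogonal_range,
    ContinuousLinearMap.adjoint_comp, ContinuousLinearMap.isSelfAdjoint_iff'.mp hP.isSelfAdjoint]
  constructor
  · intro h u hu
    have : u ∈ (ContinuousLinearMap.adjoint B ∘L P).ker := hu
    rwa [h] at this
  · intro h
    refine le_antisymm (fun u hu => h u hu) fun u (hu : P u = 0) => ?_
    show ContinuousLinearMap.adjoint B (P u) = 0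
    rw [hu, map_zero]

lemma bijective_comp_adjoint_add_smul_iff [FiniteDimensional ℝ V] (hP : IsStarProjection P)
    {H : W →L[ℝ] W} (hH : ∀ w ≠ 0, 0 < ⟪H w, w⟫_ℝ) {c : ℝ} (hc : c ≠ 0) :
    Function.Bijective (P.comp (B.comp (H.comp (ContinuousLinearMap.adjoint B)))
        + c • (ContinuousLinearMap.id ℝ V - P)) ↔ (P.comp B).range = P.range := by
  rw [range_comp_eq_range_iff hP, ← injective_comp_adjoint_add_smul_iff hP hH hc]
  exact ⟨And.left, fun h => ⟨h, (LinearMap.injective_iff_surjective (f := (_ : V →ₗ[ℝ] V))).mp h⟩⟩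

end StarProjection

section CoordProj

variable {m : ℕ} (J : Set (Fin m))

open Classical in
lemma coordProj_apply (z : E m) (i : Fin m) : coordProj J z i = if i ∈ J then z i else 0 := rfl

lemma isStarProjection_coordProj :
    IsStarProjection (LinearMap.toContinuousLinearMap (coordProj J)) := by
  classical
  refine ContinuousLinearMap.isStarProjection_iff_isSymmetricProjection.mpr ⟨?_, ?_⟩
  · ext z i
    by_cases hi : i ∈ J <;> simp [coordProj_apply, hi]
  · intro u v
    simp only [LinearMap.coe_toContinuousLinearMap, PiLp.inner_apply, coordProj_apply]
    refine Finset.sum_congr rfl fun i _ => ?_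
    by_cases hi : i ∈ J <;> simp [hi]

lemma range_coordProj : Set.range (coordProj J) = {z : E m | ∀ i ∉ J, z i = 0} := by
  classical
  ext z
  constructor
  · rintro ⟨u, rfl⟩ i hi
    simp [coordProj_apply, hi]
  · intro hz
    refine ⟨z, PiLp.ext fun i => ?_⟩
    by_cases hi : i ∈ J <;> simp [coordProj_apply, hi, hz i]

lemma min_sub_eq_coordProj {c : ℝ} {b y v : E m} (hact : ∀ i ∈ J, b i ≤ (c • y + v) i)
    (hinact : ∀ i ∉ J, (c • y + v) i ≤ b i) :
    WithLp.toLp 2 (fun i => min ((c • y + v) i) (b i)) - v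
      = coordProj J (b - v) + c • (y - coordProj J y) := by
  classical
  refine PiLp.ext fun i => ?_
  by_cases hi : i ∈ J
  · have := min_eq_right (hact i hi)
    simp_all [coordProj_apply]
  · have := min_eq_left (hinact i hi)
    simp_all [coordProj_apply]

/-- Under strict complementarity the active set of the box is locally constant. -/
lemma eventually_min_sub_eq_coordProj {c : ℝ} (hc : 0 < c) {v : E m → E m} {y₀ b : E m}
    (hv : ContinuousAt v y₀) (hJ : J = {i | v y₀ i = b i}) (hfeas : ∀ i, v y₀ i ≤ b i)
    (hcompl : ∀ i, v y₀ i < b i → y₀ i = 0) (hstrict : ∀ i ∈ J, 0 < y₀ i) :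
    ∀ᶠ y in 𝓝 y₀, WithLp.toLp 2 (fun i => min ((c • y + v y) i) (b i)) - v y
      = coordProj J (b - v y) + c • (y - coordProj J y) := by
  have hW : ∀ i, ContinuousAt (fun y => (c • y + v y) i) y₀ := fun i =>
    (EuclideanSpace.proj i).continuous.continuousAt.comp
      ((continuousAt_id.const_smul c).add hv)
  have hpattern : ∀ᶠ y in 𝓝 y₀, ∀ i,
      (i ∈ J → b i ≤ (c • y + v y) i) ∧ (i ∉ J → (c • y + v y) i ≤ b i) := by
    refine eventually_all.mpr fun i => ?_
    by_cases hi : i ∈ J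
    · have hlt : b i < (c • y₀ + v y₀) i := by
        have hbi : v y₀ i = b i := by rw [hJ] at hi; exact hi
        have := mul_pos hc (hstrict i hi)
        simp only [PiLp.add_apply, PiLp.smul_apply, smul_eq_mul, hbi]
        linarith
      filter_upwards [(hW i).eventually (lt_mem_nhds hlt)] with y hy
      exact ⟨fun _ => hy.le, fun h => absurd hi h⟩
    · have hlt : (c • y₀ + v y₀) i < b i := by
        have hbi : v y₀ i < b i := (hfeas i).lt_of_ne (by rw [hJ] at hi; exact hi)
        simpa [hcompl i hbi] using hbi
      filter_upwards [(hW i).eventually (gt_mem_nhds hlt)] with y hy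
      exact ⟨fun h => absurd h hi, fun _ => hy.le⟩
  filter_upwards [hpattern] with y hy
  exact min_sub_eq_coordProj J (fun i hi => (hy i).1 hi) (fun i hi => (hy i).2 hi)

end CoordProj

theorem jacobian_residual_polyhedral_general
    {n m : ℕ} (μ γ : ℝ) (hμ : 0 < μ) (hγ : 0 < γ)
    (f : E n → ℝ) (A : E n →L[ℝ] E m) (b : E m)
    (hC2 : ContDiff ℝ 2 f) (hsc : StrongConvexOn Set.univ μ f)
    (C : Set (E m)) (hC : C = {z : E m | ∀ i, z i ≤ b i})
    (xstar : E n) (ystar : E m)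
    (J : Set (Fin m)) (hJ : J = {i : Fin m | A xstar i = b i})
    -- primal-dual optimality (KKT) with strict complementarity
    (hfeas : A xstar ∈ C)
    (hstat : gradient f xstar = -(ContinuousLinearMap.adjoint A ystar))
    (hcompl : ∀ i, A xstar i < b i → ystar i = 0)
    (hstrict : ∀ i, i ∈ J → 0 < ystar i)
    -- the Hessian of f at x⋆ and its inverse
    (Hf Hinv : E n →L[ℝ] E n)
    (hHf : HasFDerivAt (gradient f) Hf xstar)
    (hinv1 : Hf.comp Hinv = ContinuousLinearMap.id ℝ (E n))
    (hinv2 : Hinv.comp Hf = ContinuousLinearMap.id ℝ (E n))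
    -- the alternating minimization maps
    (xmin : E m → E n)
    (hx : ∀ y x, f (xmin y) + ⟪y, A (xmin y)⟫_ℝ ≤ f x + ⟪y, A x⟫_ℝ)
    (projC : E m → E m)
    (hproj : ∀ w, projC w ∈ C ∧ ∀ z ∈ C, ‖projC w - w‖ ≤ ‖z - w‖)
    -- the residual and the claimed Jacobian
    (R : E m → E m)
    (hR : ∀ y, R y = projC ((1 / γ) • y + A (xmin y)) - A (xmin y))
    (P M : E m →L[ℝ] E m)
    (hP : P = LinearMap.toContinuousLinearMap (coordProj J))
    (hM : M = P.comp (A.comp (Hinv.comp (ContinuousLinearMap.adjoint A)))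
        + (1 / γ) • (ContinuousLinearMap.id ℝ (E m) - P)) :
    HasFDerivAt R M ystar ∧
    (Function.Bijective M ↔
      Set.range (fun x : E n => P (A x)) = {z : E m | ∀ i ∉ J, z i = 0}) := by
  obtain ⟨hxstar, hD⟩ := hsc.hasFDerivAt_argmin hμ hC2 hx hstat
    (L := ContinuousLinearEquiv.equivOfInverse' Hf Hinv hinv1 hinv2) hHf
  have hloc : R =ᶠ[𝓝 ystar] fun y => P (b - A (xmin y)) + (1 / γ) • (y - P y) := by
    subst hC hP
    filter_upwards [eventually_min_sub_eq_coordProj J (one_div_pos.mpr hγ)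
      (v := fun y => A (xmin y)) (A.continuous.continuousAt.comp hD.continuousAt)
      (by simpa [hxstar] using hJ) (by simpa [hxstar] using hfeas)
      (by simpa [hxstar] using hcompl) hstrict] with y hy
    rw [hR, eq_min_of_forall_norm_sub_le (hproj _).1 (hproj _).2, hy]
    rfl
  have hderiv : HasFDerivAt (fun y => P (b - A (xmin y)) + (1 / γ) • (y - P y)) M ystar := by
    refine ((P.hasFDerivAt.comp ystar ((A.hasFDerivAt.comp ystar hD).const_sub b)).add
      (((hasFDerivAt_id ystar).sub P.hasFDerivAt).const_smul (1 / γ))).congr_fderiv ?_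
    rw [hM]
    ext z
    simp
  refine ⟨hderiv.congr_of_eventuallyEq hloc, ?_⟩
  have hHinv : ∀ w ≠ 0, 0 < ⟪Hinv w, w⟫_ℝ := inner_apply_pos_of_comp_eq_id hμ
    (mul_norm_sq_le_inner_apply_of_hasFDerivAt
      (hsc.mul_norm_sq_le_inner_gradient_sub (hC2.differentiable (by norm_num))) hHf) hinv1
  rw [hM, bijective_comp_adjoint_add_smul_iff (hP ▸ isStarProjection_coordProj J) hHinv
    (by positivity), ← range_coordProj J, ← SetLike.coe_set_eq, LinearMap.coe_range,
    LinearMap.coe_range, hP]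
  rfl

/-- For a C² strongly convex `f` minimized subject to `Ax ≤ b`, under strict
complementarity the fixed-point residual `R_γ(y) = z_γ(y) - A x(y)` is
differentiable at the dual solution `y⋆`, its Jacobian is the block matrix
`[[A_J H A_Jᵀ, A_J H A_{J̄}ᵀ], [0, γ⁻¹ I]]` (with `H = ∇²f(x⋆)⁻¹`), and it is
nonsingular iff the active rows `A_J` have full row rank (LICQ). -/
theorem jacobian_residual_polyhedral
    {n m : ℕ} (μ γ : ℝ) (hμ : 0 < μ) (hγ : 0 < γ)
    (f : E n → ℝ) (A : E n →L[ℝ] E m) (b : E m)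
    (hC2 : ContDiff ℝ 2 f) (hsc : StrongConvexOn Set.univ μ f)
    (C : Set (E m)) (hC : C = {z : E m | ∀ i, z i ≤ b i})
    (xstar : E n) (ystar : E m)
    (J : Set (Fin m)) (hJ : J = {i : Fin m | A xstar i = b i})
    -- primal-dual optimality (KKT) with strict complementarity
    (hfeas : A xstar ∈ C)
    (hstat : gradient f xstar = -(ContinuousLinearMap.adjoint A ystar))
    (hsign : ∀ i, 0 ≤ ystar i)
    (hcompl : ∀ i, A xstar i < b i → ystar i = 0)
    (hstrict : ∀ i, i ∈ J → 0 < ystar i)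
    -- the Hessian of f at x⋆ and its inverse
    (Hf Hinv : E n →L[ℝ] E n)
    (hHf : HasFDerivAt (gradient f) Hf xstar)
    (hinv1 : Hf.comp Hinv = ContinuousLinearMap.id ℝ (E n))
    (hinv2 : Hinv.comp Hf = ContinuousLinearMap.id ℝ (E n))
    -- the alternating minimization maps
    (xmin : E m → E n)
    (hx : ∀ y x, f (xmin y) + ⟪y, A (xmin y)⟫_ℝ ≤ f x + ⟪y, A x⟫_ℝ)
    (projC : E m → E m)
    (hproj : ∀ w, projC w ∈ C ∧ ∀ z ∈ C, ‖projC w - w‖ ≤ ‖z - w‖)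
    -- the residual and the claimed Jacobian
    (R : E m → E m)
    (hR : ∀ y, R y = projC ((1 / γ) • y + A (xmin y)) - A (xmin y))
    (P M : E m →L[ℝ] E m)
    (hP : P = LinearMap.toContinuousLinearMap (coordProj J))
    (hM : M = P.comp (A.comp (Hinv.comp (ContinuousLinearMap.adjoint A)))
        + (1 / γ) • (ContinuousLinearMap.id ℝ (E m) - P)) :
    HasFDerivAt R M ystar ∧
    (Function.Bijective M ↔
      Set.range (fun x : E n => P (A x)) = {z : E m | ∀ i ∉ J, z i = 0}) :=
  jacobian_residual_polyhedral_general μ γ hμ hγ f A b hC2 hsc C hC xstar ystar J hJ hfeas hstat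
    hcompl hstrict Hf Hinv hHf hinv1 hinv2 xmin hx projC hproj R hR P M hP hM
end
end

section
/- Under the standing assumptions with 0 < γ < μ_f/‖A‖², suppose y⋆ is a strong local minimum of the dual objective ψ, i.e., there exist c, ε > 0 with ψ(y) - ψ(y⋆) ≥ (c/2)‖y - y⋆‖² for all ‖y - y⋆‖ ≤ ε. Then y⋆ is a strong local minimum of the envelope ψ_γ: there exist c', ε' > 0 with ψ_γ(y) - ψ_γ(y⋆) ≥ (c'/4)‖y - y⋆‖² for all ‖y - y⋆‖ ≤ ε'. -/
/-!
Write `T y = y + γ (A x(y) - z(y))`. Optimality of `x(y)` and of the proximal point `z(y)` make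
`-Aᵀ y` a subgradient of `f` at `x(y)` and `T y` a subgradient of `g` at `z(y)`, so Fenchel–Young
evaluates both conjugates, and the `μ`-strong convexity of `f` bounds `f*` near `-Aᵀ y`. This yields
`ψ(T y) + (1 - γ‖A‖²/μ)/(2γ) ‖y - T y‖² ≤ ψ_γ(y) ≤ ψ(y) - (γ/2) ‖A x(y) - z(y)‖²`.
At a minimiser `y⋆` of `ψ` the two bounds force `T y⋆ = y⋆`. Monotonicity of `∂g` makes `T`
Lipschitz, so for `y` near `y⋆` the growth of `ψ` at `T y` together with
`‖y - y⋆‖² ≤ 2‖T y - y⋆‖² + 2‖y - T y‖²` gives the growth of `ψ_γ` at `y`.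
-/

open scoped InnerProductSpace RealInnerProductSpace
open Filter Topology

noncomputable section

theorem nonpos_of_forall_le_mul {D C : ℝ} (h : ∀ t : ℝ, 0 < t → t ≤ 1 → D ≤ C * t) : D ≤ 0 := by
  have hlim : Tendsto (fun t : ℝ => C * t) (𝓝[>] 0) (𝓝 0) := by
    simpa using ((continuous_const_mul C).tendsto 0).mono_left nhdsWithin_le_nhds
  refine ge_of_tendsto hlim ?_
  filter_upwards [Ioc_mem_nhdsGT one_pos] with t ht using h t ht.1 ht.2

theorem min_div_four_mul_norm_sub_sq_le {F : Type*} [SeminormedAddCommGroup F] (x y z : F) {α β : ℝ}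
    (hα : 0 ≤ α) (hβ : 0 ≤ β) :
    min α β / 4 * ‖x - z‖ ^ 2 ≤ α / 2 * ‖y - z‖ ^ 2 + β / 2 * ‖x - y‖ ^ 2 := by
  have htri : ‖x - z‖ ^ 2 ≤ 2 * (‖x - y‖ ^ 2 + ‖y - z‖ ^ 2) :=
    (pow_le_pow_left₀ (norm_nonneg _) (norm_sub_le_norm_sub_add_norm_sub x y z) 2).trans add_sq_le
  have hmin : 0 ≤ min α β := le_min hα hβ
  nlinarith [min_le_left α β, min_le_right α β, sq_nonneg ‖x - y‖, sq_nonneg ‖y - z‖]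

theorem mul_div_lt_one_of_lt_div {a b c : ℝ} (hb : 0 < b) (hc : 0 ≤ c) (h : a < b / c) :
    a * c / b < 1 := by
  refine (div_lt_one hb).2 ?_
  rcases hc.eq_or_lt with h0 | hpos
  · rwa [← h0, mul_zero]
  · exact (lt_div_iff₀ hpos).1 h

theorem norm_one_sub_smul_add_smul_sq {F : Type*} [NormedAddCommGroup F] [InnerProductSpace ℝ F]
    (x y : F) (t : ℝ) :
    ‖(1 - t) • x + t • y‖ ^ 2 = (1 - t) * ‖x‖ ^ 2 + t * ‖y‖ ^ 2 - t * (1 - t) * ‖y - x‖ ^ 2 := by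
  rw [norm_add_sq_real, norm_sub_sq_real, norm_smul, norm_smul, real_inner_smul_left,
    real_inner_smul_right, real_inner_comm]
  simp only [Real.norm_eq_abs, mul_pow, sq_abs]
  ring

theorem ContinuousLinearMap.norm_adjoint_apply_le {F G : Type*} [NormedAddCommGroup F]
    [InnerProductSpace ℝ F] [CompleteSpace F] [NormedAddCommGroup G] [InnerProductSpace ℝ G]
    [CompleteSpace G] (A : F →L[ℝ] G) (w : G) : ‖adjoint A w‖ ≤ ‖A‖ * ‖w‖ :=
  ((adjoint A).le_opNorm w).trans_eq (by rw [LinearIsometryEquiv.norm_map])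

section ConvexAnalysis

variable {n : ℕ} {h : E n → EReal}

def IsStrongSubgrad (μ : ℝ) (h : E n → EReal) (p s : E n) : Prop :=
  ∀ z, h p + ((⟪s, z - p⟫ + μ / 2 * ‖z - p‖ ^ 2 : ℝ) : EReal) ≤ h z

theorem isStrongSubgrad_zero_iff {p s : E n} : IsStrongSubgrad 0 h p s ↔ s ∈ Subdiff h p := by
  simp [IsStrongSubgrad, Subdiff]

theorem ProperFun.exists_eq_coe_of_forall_le (hh : ProperFun h) {p : E n} {a : ℝ}
    {φ : E n → ℝ} (hmin : ∀ z, h p + (a : EReal) ≤ h z + (φ z : EReal)) : ∃ P : ℝ, h p = P := by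
  obtain ⟨z, hz⟩ := hh.1
  cases hP : h p with
  | bot => exact absurd hP (hh.2 p)
  | coe P => exact ⟨P, rfl⟩
  | top =>
    have := hmin z
    rw [hP, EReal.top_add_coe, top_le_iff] at this
    exact ((EReal.add_ne_top_iff_ne_top_left (EReal.coe_ne_bot _) (EReal.coe_ne_top _)).mpr hz
      this).elim

theorem EConvexOn.le_coe_of_eq_coe (hc : EConvexOn h) {x y : E n} {X Y : ℝ} (hx : h x = X)
    (hy : h y = Y) {t : ℝ} (ht₀ : 0 ≤ t) (ht₁ : t ≤ 1) :
    h ((1 - t) • x + t • y) ≤ (((1 - t) * X + t * Y : ℝ) : EReal) := by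
  have := hc x y (1 - t) t (by linarith) ht₀ (by ring)
  rwa [hx, hy, ← EReal.coe_mul, ← EReal.coe_mul, ← EReal.coe_add] at this

theorem exists_eq_coe_of_ne_bot_of_le_coe {a : EReal} {s : ℝ} (hb : a ≠ ⊥) (hs : a ≤ s) :
    ∃ M : ℝ, a = M :=
  ⟨a.toReal, (EReal.coe_toReal (ne_top_of_le_ne_top (EReal.coe_ne_top s) hs) hb).symm⟩

theorem StronglyConvexWithMod.isStrongSubgrad {μ : ℝ} (hsc : StronglyConvexWithMod μ h)
    {p s : E n} {P : ℝ} (hP : h p = P) (hs : s ∈ Subdiff h p) : IsStrongSubgrad μ h p s := by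
  intro z
  have hz := hs z
  rw [hP, ← EReal.coe_add] at hz
  cases hZ : h z with
  | bot => rw [hZ] at hz; simp at hz
  | top => exact le_top
  | coe Z =>
    rw [hP, ← EReal.coe_add, EReal.coe_le_coe_iff]
    rw [hZ, EReal.coe_le_coe_iff] at hz
    suffices μ / 2 * ‖z - p‖ ^ 2 - (Z - P - ⟪s, z - p⟫) ≤ 0 by linarith
    refine nonpos_of_forall_le_mul (C := μ / 2 * ‖z - p‖ ^ 2) fun t ht₀ ht₁ => ?_
    set w := (1 - t) • p + t • z with hw
    have hconv := EConvexOn.le_coe_of_eq_coe hsc (x := p) (y := z)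
      (X := P - μ / 2 * ‖p‖ ^ 2) (Y := Z - μ / 2 * ‖z‖ ^ 2) (by rw [hP, EReal.coe_sub])
      (by rw [hZ, EReal.coe_sub]) ht₀.le ht₁
    beta_reduce at hconv
    rw [← hw, EReal.sub_le_iff_le_add (.inl (EReal.coe_ne_bot _)) (.inl (EReal.coe_ne_top _)),
      ← EReal.coe_add] at hconv
    have hsub := hs w
    have hwp : w - p = t • (z - p) := by rw [hw]; module
    rw [hwp, inner_smul_right, hP, ← EReal.coe_add] at hsub
    obtain ⟨M, hM⟩ := exists_eq_coe_of_ne_bot_of_le_coe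
      (ne_bot_of_le_ne_bot (EReal.coe_ne_bot _) hsub) hconv
    rw [hM, EReal.coe_le_coe_iff] at hconv hsub
    rw [norm_one_sub_smul_add_smul_sq] at hconv
    nlinarith

theorem IsProx.inv_smul_sub_mem_subdiff {τ : ℝ} (hτ : 0 < τ) (hh : ProperFun h)
    (hc : EConvexOn h) {v p : E n} (hp : IsProx τ h v p) : τ⁻¹ • (v - p) ∈ Subdiff h p := by
  obtain ⟨P, hP⟩ := hh.exists_eq_coe_of_forall_le hp
  intro z
  cases hZ : h z with
  | bot => exact absurd hZ (hh.2 z)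
  | top => exact le_top
  | coe Z =>
    rw [hP, ← EReal.coe_add, EReal.coe_le_coe_iff, real_inner_smul_left]
    suffices P + τ⁻¹ * ⟪v - p, z - p⟫ - Z ≤ 0 by linarith
    refine nonpos_of_forall_le_mul (C := ‖z - p‖ ^ 2 / (2 * τ)) fun t ht₀ ht₁ => ?_
    set w := (1 - t) • p + t • z with hw
    have hconv := hc.le_coe_of_eq_coe hP hZ ht₀.le ht₁
    obtain ⟨M, hM⟩ := exists_eq_coe_of_ne_bot_of_le_coe (hh.2 w) hconv
    have hprox := hp w
    rw [hP, hM, ← EReal.coe_add, ← EReal.coe_add, EReal.coe_le_coe_iff] at hprox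
    rw [hM, EReal.coe_le_coe_iff] at hconv
    have hwv : ‖w - v‖ ^ 2 = ‖p - v‖ ^ 2 - 2 * t * ⟪v - p, z - p⟫ + t ^ 2 * ‖z - p‖ ^ 2 := by
      rw [show w - v = (p - v) + t • (z - p) by rw [hw]; module, norm_add_sq_real,
        real_inner_smul_right, norm_smul, Real.norm_eq_abs, mul_pow, sq_abs,
        ← neg_sub v p, inner_neg_left]
      ring
    rw [hwv] at hprox
    have hkey : t * (P + τ⁻¹ * ⟪v - p, z - p⟫ - Z) ≤ t * (‖z - p‖ ^ 2 / (2 * τ) * t) := by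
      have hlin : 1 / (2 * τ) * (2 * t * ⟪v - p, z - p⟫) = t * (τ⁻¹ * ⟪v - p, z - p⟫) := by
        field_simp
      have hquad : 1 / (2 * τ) * (t ^ 2 * ‖z - p‖ ^ 2) = t * (‖z - p‖ ^ 2 / (2 * τ) * t) := by
        field_simp
      nlinarith
    exact le_of_mul_le_mul_left hkey ht₀

theorem conjFn_eq_of_mem_subdiff {p s : E n} {P : ℝ} (hP : h p = P) (hs : s ∈ Subdiff h p) :
    conjFn h s = ((⟪p, s⟫ - P : ℝ) : EReal) := by
  refine le_antisymm (iSup_le fun z => ?_) (le_iSup_of_le p (by rw [hP, EReal.coe_sub]))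
  have hz := hs z
  rw [hP, ← EReal.coe_add] at hz
  calc ((⟪z, s⟫ : ℝ) : EReal) - h z ≤ ((⟪z, s⟫ : ℝ) : EReal) - ((P + ⟪s, z - p⟫ : ℝ) : EReal) :=
        EReal.sub_le_sub le_rfl hz
    _ = ((⟪p, s⟫ - P : ℝ) : EReal) := by
        rw [← EReal.coe_sub, inner_sub_right, real_inner_comm z, real_inner_comm p]
        congr 1
        ring

theorem IsStrongSubgrad.conjFn_le {μ : ℝ} (hμ : 0 < μ) {p s : E n} {P : ℝ} (hP : h p = P)
    (hs : IsStrongSubgrad μ h p s) (s' : E n) :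
    conjFn h s' ≤ ((⟪p, s'⟫ - P + ‖s' - s‖ ^ 2 / (2 * μ) : ℝ) : EReal) := by
  refine iSup_le fun z => ?_
  have hz := hs z
  rw [hP, ← EReal.coe_add] at hz
  refine (EReal.sub_le_sub le_rfl hz).trans ?_
  rw [← EReal.coe_sub, EReal.coe_le_coe_iff]
  have hcs := real_inner_le_norm (s' - s) (z - p)
  have hsplit : ⟪z, s'⟫ - (P + (⟪s, z - p⟫ + μ / 2 * ‖z - p‖ ^ 2))
      = ⟪p, s'⟫ - P + ⟪s' - s, z - p⟫ - μ / 2 * ‖z - p‖ ^ 2 := by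
    simp only [inner_sub_right, real_inner_comm z, real_inner_comm p]
    ring
  have hamgm : ‖s' - s‖ * ‖z - p‖ ≤ ‖s' - s‖ ^ 2 / (2 * μ) + μ / 2 * ‖z - p‖ ^ 2 := by
    rw [div_add' _ _ _ (by positivity), le_div_iff₀ (by positivity)]
    nlinarith [sq_nonneg (‖s' - s‖ - μ * ‖z - p‖)]
  linarith

theorem IsStrongSubgrad.mul_norm_sub_sq_le {μ : ℝ} {p p' s s' : E n} {P P' : ℝ}
    (hP : h p = P) (hP' : h p' = P') (hs : IsStrongSubgrad μ h p s)
    (hs' : IsStrongSubgrad μ h p' s') : μ * ‖p - p'‖ ^ 2 ≤ ⟪s - s', p - p'⟫ := by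
  have h₁ := hs p'
  have h₂ := hs' p
  rw [hP, hP', ← EReal.coe_add, EReal.coe_le_coe_iff] at h₁ h₂
  rw [norm_sub_rev p' p, ← neg_sub p p', inner_neg_right] at h₁
  rw [inner_sub_left]
  linarith

theorem IsStrongSubgrad.mul_norm_sub_le {μ : ℝ} {p p' s s' : E n} {P P' : ℝ}
    (hP : h p = P) (hP' : h p' = P') (hs : IsStrongSubgrad μ h p s)
    (hs' : IsStrongSubgrad μ h p' s') : μ * ‖p - p'‖ ≤ ‖s - s'‖ := by
  have hmono := hs.mul_norm_sub_sq_le hP hP' hs'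
  have hcs := real_inner_le_norm (s - s') (p - p')
  rcases (norm_nonneg (p - p')).eq_or_lt with h0 | hpos
  · rw [← h0, mul_zero]; exact norm_nonneg _
  · exact le_of_mul_le_mul_right (by nlinarith) hpos

theorem neg_mem_subdiff_of_forall_add_inner_le {p a : E n}
    (hmin : ∀ z, h p + ((⟪a, p⟫ : ℝ) : EReal) ≤ h z + ((⟪a, z⟫ : ℝ) : EReal)) :
    -a ∈ Subdiff h p := by
  intro z
  have := add_le_add_left (hmin z) ((-⟪a, z⟫ : ℝ) : EReal)
  rw [add_assoc, add_assoc, ← EReal.coe_add, ← EReal.coe_add, add_neg_cancel, EReal.coe_zero,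
    add_zero] at this
  rwa [inner_neg_left, inner_sub_right, neg_sub, sub_eq_add_neg]

end ConvexAnalysis

/-- The map `T_γ` of the paper. -/
def multiplierUpdate {n m : ℕ} (A : E n →L[ℝ] E m) (γ : ℝ) (xmin : E m → E n)
    (zmin : E m → E m) (y : E m) : E m :=
  y + γ • (A (xmin y) - zmin y)

section AlternatingMinimization

open ContinuousLinearMap

variable {n m : ℕ} {f : E n → EReal} {g : E m → EReal} {A : E n →L[ℝ] E m}
  {xmin : E m → E n} {zmin : E m → E m} {μ γ : ℝ}

theorem neg_adjoint_mem_subdiff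
    (hx : ∀ y x, f (xmin y) + ((⟪y, A (xmin y)⟫ : ℝ) : EReal) ≤ f x + ((⟪y, A x⟫ : ℝ) : EReal))
    (y : E m) : -(adjoint A y) ∈ Subdiff f (xmin y) :=
  neg_mem_subdiff_of_forall_add_inner_le fun z => by
    simpa only [adjoint_inner_left] using hx y z

theorem multiplierUpdate_mem_subdiff (hγ : 0 < γ) (hg : ProperFun g) (hgc : EConvexOn g)
    {y : E m} (hz : IsProx γ⁻¹ g (γ⁻¹ • y + A (xmin y)) (zmin y)) :
    multiplierUpdate A γ xmin zmin y ∈ Subdiff g (zmin y) := by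
  have := hz.inv_smul_sub_mem_subdiff (inv_pos.2 hγ) hg hgc
  rwa [inv_inv, add_sub_assoc, smul_add, smul_inv_smul₀ hγ.ne'] at this

theorem AME_eq_coe {y : E m} {F G : ℝ} (hF : f (xmin y) = F) (hG : g (zmin y) = G) :
    AME f g A γ xmin zmin y = ((-(F + G + ⟪y, A (xmin y) - zmin y⟫
      + γ / 2 * ‖A (xmin y) - zmin y‖ ^ 2) : ℝ) : EReal) := by
  simp only [AME, hF, hG, ← EReal.coe_add, ← EReal.coe_neg, add_assoc]

theorem AME_add_le_dualObj {y : E m} {F G : ℝ} (hfx : -(adjoint A y) ∈ Subdiff f (xmin y))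
    (hF : f (xmin y) = F) (hG : g (zmin y) = G) :
    AME f g A γ xmin zmin y + ((γ / 2 * ‖A (xmin y) - zmin y‖ ^ 2 : ℝ) : EReal)
      ≤ dualObj f g A y := by
  have hg : ((⟪zmin y, y⟫ - G : ℝ) : EReal) ≤ conjFn g y :=
    le_iSup_of_le (zmin y) (by rw [hG, EReal.coe_sub])
  rw [dualObj, conjFn_eq_of_mem_subdiff hF hfx, AME_eq_coe hF hG, ← EReal.coe_add]
  refine le_trans (le_of_eq ?_) (add_le_add_right hg _)
  rw [← EReal.coe_add]
  congr 1
  rw [inner_neg_right, adjoint_inner_right, inner_sub_right, real_inner_comm (A _),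
    real_inner_comm (zmin y)]
  ring

theorem dualObj_multiplierUpdate_add_le_AME (hμ : 0 < μ) (hγ : 0 < γ)
    (hsc : StronglyConvexWithMod μ f) {y : E m} {F G : ℝ}
    (hfx : -(adjoint A y) ∈ Subdiff f (xmin y))
    (hgz : multiplierUpdate A γ xmin zmin y ∈ Subdiff g (zmin y))
    (hF : f (xmin y) = F) (hG : g (zmin y) = G) :
    dualObj f g A (multiplierUpdate A γ xmin zmin y)
        + (((1 - γ * ‖A‖ ^ 2 / μ) / γ / 2 * ‖y - multiplierUpdate A γ xmin zmin y‖ ^ 2 : ℝ) : EReal)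
      ≤ AME f g A γ xmin zmin y := by
  set T := multiplierUpdate A γ xmin zmin y with hT
  have hfconj := (hsc.isStrongSubgrad hF hfx).conjFn_le hμ hF (-(adjoint A T))
  rw [dualObj, conjFn_eq_of_mem_subdiff hG hgz, AME_eq_coe hF hG]
  set u := A (xmin y) - zmin y with hu
  refine (add_le_add_left (add_le_add_left hfconj _) _).trans ?_
  rw [← EReal.coe_add, ← EReal.coe_add, EReal.coe_le_coe_iff]
  have hyT : y - T = -(γ • u) := by rw [hT, multiplierUpdate]; abel
  have hnorm : ‖y - T‖ = γ * ‖u‖ := by rw [hyT, norm_neg, norm_smul, Real.norm_of_nonneg hγ.le]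
  have hadj : ‖-(adjoint A T) - -(adjoint A y)‖ ≤ ‖A‖ * (γ * ‖u‖) := by
    rw [neg_sub_neg, ← map_sub, ← hnorm]
    exact A.norm_adjoint_apply_le _
  have hinner : ⟪xmin y, -(adjoint A T)⟫ + ⟪zmin y, T⟫ = -⟪y, u⟫ - γ * ‖u‖ ^ 2 := by
    have hTu : T = y + γ • u := rfl
    have hsplit : ⟪xmin y, -(adjoint A T)⟫ + ⟪zmin y, T⟫ = -⟪u, T⟫ := by
      rw [inner_neg_right, adjoint_inner_right, hu, inner_sub_left]
      ring
    rw [hsplit, hTu, inner_add_right, real_inner_smul_right, real_inner_self_eq_norm_sq,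
      real_inner_comm]
    ring
  have hcoef : (1 - γ * ‖A‖ ^ 2 / μ) / γ / 2 * ‖y - T‖ ^ 2
      = γ / 2 * ‖u‖ ^ 2 - (‖A‖ * (γ * ‖u‖)) ^ 2 / (2 * μ) := by
    rw [hnorm]; field_simp
  have hsq : ‖-(adjoint A T) - -(adjoint A y)‖ ^ 2 ≤ (‖A‖ * (γ * ‖u‖)) ^ 2 :=
    pow_le_pow_left₀ (norm_nonneg _) hadj 2
  have hdiv := div_le_div_of_nonneg_right hsq (by positivity : (0 : ℝ) ≤ 2 * μ)
  linarith

theorem norm_multiplierUpdate_sub_le (hμ : 0 < μ) (hγ : 0 < γ) (hsc : StronglyConvexWithMod μ f)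
    (hfx : ∀ y, -(adjoint A y) ∈ Subdiff f (xmin y))
    (hgz : ∀ y, multiplierUpdate A γ xmin zmin y ∈ Subdiff g (zmin y))
    {F G : E m → ℝ} (hF : ∀ y, f (xmin y) = F y) (hG : ∀ y, g (zmin y) = G y) (y y' : E m) :
    ‖multiplierUpdate A γ xmin zmin y - multiplierUpdate A γ xmin zmin y'‖
      ≤ (1 + γ * ‖A‖ ^ 2 / μ) * ‖y - y'‖ := by
  set T := multiplierUpdate A γ xmin zmin
  set d := T y - T y'
  have hxlip : μ * ‖xmin y - xmin y'‖ ≤ ‖A‖ * ‖y - y'‖ := by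
    have := (hsc.isStrongSubgrad (hF y) (hfx y)).mul_norm_sub_le (hF y) (hF y')
      (hsc.isStrongSubgrad (hF y') (hfx y'))
    rw [neg_sub_neg, ← map_sub] at this
    exact this.trans ((A.norm_adjoint_apply_le _).trans_eq (by rw [norm_sub_rev]))
  have hmono : 0 ≤ ⟪d, zmin y - zmin y'⟫ := by
    simpa using (isStrongSubgrad_zero_iff.2 (hgz y)).mul_norm_sub_sq_le (hG y) (hG y')
      (isStrongSubgrad_zero_iff.2 (hgz y'))
  have hzsub : zmin y - zmin y' = A (xmin y - xmin y') + γ⁻¹ • ((y - y') - d) := by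
    simp only [d, T, multiplierUpdate, map_sub, smul_sub, smul_add, inv_smul_smul₀ hγ.ne']
    abel
  have hkey : ‖d‖ ^ 2 ≤ γ * ⟪d, A (xmin y - xmin y')⟫ + ⟪d, y - y'⟫ := by
    rw [hzsub, inner_add_right, real_inner_smul_right, inner_sub_right,
      real_inner_self_eq_norm_sq] at hmono
    have := mul_le_mul_of_nonneg_left hmono hγ.le
    rw [mul_zero, mul_add, ← mul_assoc, mul_inv_cancel₀ hγ.ne', one_mul] at this
    linarith
  have hA : γ * ⟪d, A (xmin y - xmin y')⟫ ≤ ‖d‖ * (γ * ‖A‖ ^ 2 / μ * ‖y - y'‖) := by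
    have h₁ := (real_inner_le_norm d _).trans
      (mul_le_mul_of_nonneg_left (A.le_opNorm (xmin y - xmin y')) (norm_nonneg d))
    have h₂ : ‖A‖ * ‖xmin y - xmin y'‖ ≤ ‖A‖ ^ 2 / μ * ‖y - y'‖ := by
      rw [div_mul_eq_mul_div, le_div_iff₀ hμ]
      nlinarith [norm_nonneg A]
    calc γ * ⟪d, A (xmin y - xmin y')⟫ ≤ γ * (‖d‖ * (‖A‖ * ‖xmin y - xmin y'‖)) := by gcongr
      _ ≤ γ * (‖d‖ * (‖A‖ ^ 2 / μ * ‖y - y'‖)) := by gcongr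
      _ = ‖d‖ * (γ * ‖A‖ ^ 2 / μ * ‖y - y'‖) := by ring
  have hy := real_inner_le_norm d (y - y')
  have hL : 0 ≤ (1 + γ * ‖A‖ ^ 2 / μ) * ‖y - y'‖ := by positivity
  nlinarith [norm_nonneg d]

theorem multiplierUpdate_eq_self_of_isMin (hμ : 0 < μ) (hγ : 0 < γ)
    (hκ : γ * ‖A‖ ^ 2 / μ ≤ 1) (hsc : StronglyConvexWithMod μ f) {y : E m} {F G : ℝ}
    (hmin : ∀ w, dualObj f g A y ≤ dualObj f g A w)
    (hfx : -(adjoint A y) ∈ Subdiff f (xmin y))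
    (hgz : multiplierUpdate A γ xmin zmin y ∈ Subdiff g (zmin y))
    (hF : f (xmin y) = F) (hG : g (zmin y) = G) :
    multiplierUpdate A γ xmin zmin y = y := by
  have hsqueeze := (add_le_add_left ((AME_add_le_dualObj (γ := γ) hfx hF hG).trans
    (hmin (multiplierUpdate A γ xmin zmin y))) _).trans
    (dualObj_multiplierUpdate_add_le_AME hμ hγ hsc hfx hgz hF hG)
  rw [AME_eq_coe hF hG, ← EReal.coe_add, ← EReal.coe_add, EReal.coe_le_coe_iff] at hsqueeze
  have hβ : 0 ≤ (1 - γ * ‖A‖ ^ 2 / μ) / γ / 2 :=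
    div_nonneg (div_nonneg (sub_nonneg.2 hκ) hγ.le) zero_le_two
  have hu : ‖A (xmin y) - zmin y‖ ^ 2 ≤ 0 := by
    nlinarith [mul_nonneg hβ (sq_nonneg ‖y - multiplierUpdate A γ xmin zmin y‖)]
  have hu0 : A (xmin y) - zmin y = 0 :=
    norm_eq_zero.1 ((pow_eq_zero_iff two_ne_zero).1 (le_antisymm hu (sq_nonneg _)))
  rw [multiplierUpdate, hu0, smul_zero, add_zero]

end AlternatingMinimization

theorem strong_min_dual_to_strong_min_AME_general
    {n m : ℕ} (μ γ : ℝ) (hμ : 0 < μ) (hγ : 0 < γ)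
    (f : E n → EReal) (g : E m → EReal) (A : E n →L[ℝ] E m)
    (hf : ProperClosedConvex f) (hsc : StronglyConvexWithMod μ f)
    (hg : ProperClosedConvex g)
    (xmin : E m → E n)
    (hx : ∀ y x, f (xmin y) + ((⟪y, A (xmin y)⟫_ℝ : ℝ) : EReal)
        ≤ f x + ((⟪y, A x⟫_ℝ : ℝ) : EReal))
    (zmin : E m → E m)
    (hz : ∀ y, IsProx γ⁻¹ g (γ⁻¹ • y + A (xmin y)) (zmin y))
    (hγA : γ < μ / ‖A‖ ^ 2)
    (ystar : E m) (hystar : ∀ w, dualObj f g A ystar ≤ dualObj f g A w)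
    (c ε : ℝ) (hc : 0 < c) (hε : 0 < ε)
    (hstrong : ∀ y : E m, ‖y - ystar‖ ≤ ε →
      dualObj f g A ystar + ((c / 2 * ‖y - ystar‖ ^ 2 : ℝ) : EReal)
        ≤ dualObj f g A y) :
    ∃ c' > (0:ℝ), ∃ ε' > (0:ℝ), ∀ y : E m, ‖y - ystar‖ ≤ ε' →
      AME f g A γ xmin zmin ystar + ((c' / 4 * ‖y - ystar‖ ^ 2 : ℝ) : EReal)
        ≤ AME f g A γ xmin zmin y := by
  choose F hF using fun y => hf.1.exists_eq_coe_of_forall_le (hx y)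
  choose G hG using fun y => hg.1.exists_eq_coe_of_forall_le (hz y)
  have hfx := neg_adjoint_mem_subdiff hx
  have hgz := fun y => multiplierUpdate_mem_subdiff hγ hg.1 hg.2.2 (hz y)
  have hκ : γ * ‖A‖ ^ 2 / μ < 1 := mul_div_lt_one_of_lt_div hμ (sq_nonneg _) hγA
  have hfix := multiplierUpdate_eq_self_of_isMin hμ hγ hκ.le hsc hystar (hfx ystar) (hgz ystar)
    (hF ystar) (hG ystar)
  set T := multiplierUpdate A γ xmin zmin
  set β := (1 - γ * ‖A‖ ^ 2 / μ) / γ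
  refine ⟨min c β, lt_min hc (div_pos (by linarith) hγ), ε / 2, half_pos hε, fun y hy => ?_⟩
  have hTy : ‖T y - ystar‖ ≤ ε := by
    rw [← hfix]
    nlinarith [norm_multiplierUpdate_sub_le hμ hγ hsc hfx hgz hF hG y ystar,
      norm_nonneg (y - ystar)]
  calc AME f g A γ xmin zmin ystar + ((min c β / 4 * ‖y - ystar‖ ^ 2 : ℝ) : EReal)
      ≤ dualObj f g A ystar + ((c / 2 * ‖T y - ystar‖ ^ 2 + β / 2 * ‖y - T y‖ ^ 2 : ℝ) : EReal) :=
        add_le_add (le_add_of_nonneg_right (EReal.coe_nonneg.2 (by positivity)) |>.trans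
          (AME_add_le_dualObj (hfx ystar) (hF ystar) (hG ystar)))
          (EReal.coe_le_coe_iff.2 (min_div_four_mul_norm_sub_sq_le _ _ _ hc.le (by positivity)))
    _ = dualObj f g A ystar + ((c / 2 * ‖T y - ystar‖ ^ 2 : ℝ) : EReal)
          + ((β / 2 * ‖y - T y‖ ^ 2 : ℝ) : EReal) := by rw [EReal.coe_add, add_assoc]
    _ ≤ dualObj f g A (T y) + ((β / 2 * ‖y - T y‖ ^ 2 : ℝ) : EReal) :=
        add_le_add_left (hstrong _ hTy) _
    _ ≤ AME f g A γ xmin zmin y :=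
        dualObj_multiplierUpdate_add_le_AME hμ hγ hsc (hfx y) (hgz y) (hF y) (hG y)

/-- If the dual objective has a strong local minimum at its minimizer, then so
does the alternating minimization envelope. -/
theorem strong_min_dual_to_strong_min_AME
    {n m : ℕ} (μ γ : ℝ) (hμ : 0 < μ) (hγ : 0 < γ)
    (f : E n → EReal) (g : E m → EReal) (A : E n →L[ℝ] E m)
    (hf : ProperClosedConvex f) (hsc : StronglyConvexWithMod μ f)
    (hg : ProperClosedConvex g)
    (hfeas : ∃ x, f x ≠ ⊤ ∧ g (A x) ≠ ⊤)
    (xmin : E m → E n)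
    (hx : ∀ y x, f (xmin y) + ((⟪y, A (xmin y)⟫_ℝ : ℝ) : EReal)
        ≤ f x + ((⟪y, A x⟫_ℝ : ℝ) : EReal))
    (zmin : E m → E m)
    (hz : ∀ y, IsProx γ⁻¹ g (γ⁻¹ • y + A (xmin y)) (zmin y))
    (hγA : γ < μ / ‖A‖ ^ 2)
    (ystar : E m) (hystar : ∀ w, dualObj f g A ystar ≤ dualObj f g A w)
    (c ε : ℝ) (hc : 0 < c) (hε : 0 < ε)
    (hstrong : ∀ y : E m, ‖y - ystar‖ ≤ ε →
      dualObj f g A ystar + ((c / 2 * ‖y - ystar‖ ^ 2 : ℝ) : EReal)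
        ≤ dualObj f g A y) :
    ∃ c' > (0:ℝ), ∃ ε' > (0:ℝ), ∀ y : E m, ‖y - ystar‖ ≤ ε' →
      AME f g A γ xmin zmin ystar + ((c' / 4 * ‖y - ystar‖ ^ 2 : ℝ) : EReal)
        ≤ AME f g A γ xmin zmin y :=
  strong_min_dual_to_strong_min_AME_general μ γ hμ hγ f g A hf hsc hg xmin hx zmin hz hγA ystar
    hystar c ε hc hε hstrong
end
end
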